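/- arXiv:2401.02545 — 2 statements merged into one kernel-verified Lean document; each statement's English description precedes it below -/
import Mathlib

section
/- Let q be a complex number with 0 < ‖q‖ < 1, let j be a natural number, and let p be a natural number with p ≥ 1. Then the series i ↦ (Nat.choose (i + p - 1) (p - 1) : ℂ) * q^(2*i*(j+1)) is summable, the denominator q^(j+1) − q^(-(j+1)) is nonzero, and ((q^j − q^(-j)) / (q^(j+1) − q^(-(j+1))))^p = q^p * (1 − q^(2*j))^p * ∑'_{i : ℕ} (Nat.choose (i + p - 1) (p - 1) : ℂ) * q^(2*i*(j+1)). (This is Lemma 6.6 ('bPowSer') of the paper: ([j]/[j+1])^p = q^p (1−q^{2j})^p ∑_{i=0}^∞ C(i+p−1, p−1) q^{2i(j+1)}.) -/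
/-- Lemma 6.6 ('bPowSer'): for `q : ℂ` with `0 < ‖q‖ < 1`, `j : ℕ`, and `p ≥ 1`,
the series `∑ᵢ C(i+p-1, p-1) q^(2i(j+1))` is summable, `q^(j+1) - q^(-(j+1)) ≠ 0`, and
`((q^j - q^{-j})/(q^{j+1} - q^{-(j+1)}))^p = q^p (1 - q^{2j})^p ∑ᵢ C(i+p-1,p-1) q^{2i(j+1)}`. -/
theorem b_pow_ser (q : ℂ) (hq0 : 0 < ‖q‖) (hq1 : ‖q‖ < 1) (j p : ℕ) (hp : 1 ≤ p) :
    Summable (fun i : ℕ => ((i + p - 1).choose (p - 1) : ℂ) * q ^ (2 * i * (j + 1))) ∧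
    q ^ ((j : ℤ) + 1) - q ^ (-((j : ℤ) + 1)) ≠ 0 ∧
    ((q ^ (j : ℤ) - q ^ (-(j : ℤ))) / (q ^ ((j : ℤ) + 1) - q ^ (-((j : ℤ) + 1)))) ^ p =
      q ^ p * (1 - q ^ (2 * j)) ^ p *
        ∑' i : ℕ, ((i + p - 1).choose (p - 1) : ℂ) * q ^ (2 * i * (j + 1)) := by
  have hq : q ≠ 0 := by
    intro h; simp [h] at hq0
  set r : ℂ := q ^ (2 * (j + 1)) with hr
  have hrnorm : ‖r‖ < 1 := by
    rw [hr, norm_pow]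
    calc ‖q‖ ^ (2 * (j + 1)) ≤ ‖q‖ ^ 1 :=
          pow_le_pow_of_le_one (norm_nonneg q) hq1.le (by omega)
      _ = ‖q‖ := pow_one _
      _ < 1 := hq1
  have hfun : (fun i : ℕ => ((i + p - 1).choose (p - 1) : ℂ) * q ^ (2 * i * (j + 1)))
      = (fun i : ℕ => ((i + (p - 1)).choose (p - 1) : ℂ) * r ^ i) := by
    funext i
    rw [show i + p - 1 = i + (p - 1) by omega, hr, ← pow_mul,
      show 2 * (j + 1) * i = 2 * i * (j + 1) by ring]
  have hsum : Summable (fun i : ℕ => ((i + p - 1).choose (p - 1) : ℂ) * q ^ (2 * i * (j + 1))) := by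
    rw [hfun]
    exact summable_choose_mul_geometric_of_norm_lt_one _ hrnorm
  have hr1 : 1 - r ≠ 0 := by
    intro h
    have : r = 1 := by linear_combination -h
    rw [this] at hrnorm; simp at hrnorm
  have ej : q ^ ((j : ℤ)) = q ^ j := zpow_natCast q j
  have ej1 : q ^ ((j : ℤ) + 1) = q ^ (j + 1) := by
    rw [← zpow_natCast q (j + 1)]; norm_cast
  have enj : q ^ (-(j : ℤ)) = (q ^ j)⁻¹ := by rw [zpow_neg, ej]
  have enj1 : q ^ (-((j : ℤ) + 1)) = (q ^ (j + 1))⁻¹ := by rw [zpow_neg, ej1]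
  have hpj : q ^ (j + 1) ≠ 0 := pow_ne_zero _ hq
  have hden : q ^ ((j : ℤ) + 1) - q ^ (-((j : ℤ) + 1)) ≠ 0 := by
    rw [ej1, enj1]
    intro h
    apply hr1
    have h2 : q ^ (j + 1) * (q ^ (j + 1) - (q ^ (j + 1))⁻¹) = 0 := by rw [h, mul_zero]
    rw [mul_sub, mul_inv_cancel₀ hpj, ← pow_add, sub_eq_zero] at h2
    rw [hr, show 2 * (j + 1) = j + 1 + (j + 1) by ring]
    linear_combination -h2
  refine ⟨hsum, hden, ?_⟩
  have htsum : ∑' i : ℕ, ((i + p - 1).choose (p - 1) : ℂ) * q ^ (2 * i * (j + 1))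
      = 1 / (1 - r) ^ ((p - 1) + 1) := by
    rw [hfun]
    exact tsum_choose_mul_geometric_of_norm_lt_one _ hrnorm
  rw [htsum, show (p - 1) + 1 = p by omega]
  have hkey : (q ^ (j : ℤ) - q ^ (-(j : ℤ))) / (q ^ ((j : ℤ) + 1) - q ^ (-((j : ℤ) + 1)))
      = q * (1 - q ^ (2 * j)) / (1 - r) := by
    rw [ej, enj, ej1, enj1]
    rw [div_eq_div_iff (by rw [ej1, enj1] at hden; exact hden) hr1, hr]
    field_simp
    ring
  rw [hkey, div_pow, mul_pow, mul_comm (q ^ p * (1 - q ^ (2 * j)) ^ p), one_div, inv_mul_eq_div]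
end

section
/- Work in the field RatFunc ℂ of rational functions over ℂ in the variable X. Fix an integer r. Let a₀ ∈ LaurentPolynomial ℂ and let a : ℤ × ℕ → LaurentPolynomial ℂ be finitely supported with a (k,p) = 0 unless k ≥ r and p ≥ 1. Suppose that for every integer n with n ≥ −(r+1), the identity a₀ + ∑_{(k,p)} a (k,p) · ((X^(n+k+1) − X^(-(n+k+1))) / (X^(n+k+2) − X^(-(n+k+2))))^p = 0 holds in RatFunc ℂ, where Laurent polynomials in T are mapped into RatFunc ℂ by T ↦ X. Then a₀ = 0 and a (k,p) = 0 for all (k,p). (This is the linear-independence statement established in the proof of Proposition 6.8: no nontrivial ℂ[q,q⁻¹]-linear combination of 1 and the powers ([n+k+1]/[n+k+2])^p can vanish for all n > −(r+2).) -/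
/-!
Put `z = X ^ (2 * n)`. Then `[n+k+1]/[n+k+2] = (X⁻¹ z - X^(-(2k+3))) / (z - X^(-(2k+4)))`, so the
hypothesis says that `a₀ + ∑ a_{k,p} (A_k(z) / (z - ρ_k))^p` vanishes at infinitely many `z`, where
the poles `ρ_k` are pairwise distinct and `A_k(ρ_k) ≠ 0`. Let `m_k` be the largest `p` with `(k, p)`
in the support of `a`. Multiplying by `∏_k (z - ρ_k)^(m_k)` gives a polynomial with infinitely
many roots, hence zero. At `z = ρ_k` it reduces to
`a_{k,m_k} A_k(ρ_k)^(m_k) ∏_{l ≠ k} (ρ_k - ρ_l)^(m_l)`, so `a_{k,m_k} = 0`, which is impossible for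
`(k, m_k)` in the support; hence `a = 0`, and then `a₀ = 0`.
-/

open LaurentPolynomial

noncomputable section

/-- The embedding `ℂ[q,q⁻¹] → ℂ(X)` sending `T` (i.e. `q`) to `X`. -/
noncomputable def laurentToRatFunc : LaurentPolynomial ℂ →ₐ[ℂ] RatFunc ℂ :=
  AddMonoidAlgebra.lift ℂ (RatFunc ℂ) ℤ
    { toFun := fun n => (RatFunc.X : RatFunc ℂ) ^ (Multiplicative.toAdd n)
      map_one' := by simp
      map_mul' := fun a b => by
        simp only [toAdd_mul]
        exact zpow_add₀ RatFunc.X_ne_zero _ _ }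

open Polynomial Function

section PoleSum

variable {F ι : Type*} [Field F] [DecidableEq ι]

lemma div_pow_mul_pow_of_le {a b : F} (hb : b ≠ 0) {p m : ℕ} (hpm : p ≤ m) :
    (a / b) ^ p * b ^ m = a ^ p * b ^ (m - p) := by
  rw [div_pow, div_mul_eq_mul_div, div_eq_iff (pow_ne_zero _ hb), mul_assoc, ← pow_add,
    Nat.sub_add_cancel hpm]

def poleOrder (S : Finset (ι × ℕ)) (k : ι) : ℕ := (S.filter fun kp => kp.1 = k).sup Prod.snd

lemma le_poleOrder {S : Finset (ι × ℕ)} {kp : ι × ℕ} (h : kp ∈ S) : kp.2 ≤ poleOrder S kp.1 :=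
  Finset.le_sup (Finset.mem_filter.2 ⟨h, rfl⟩)

lemma exists_mem_snd_eq_poleOrder {S : Finset (ι × ℕ)} {kp : ι × ℕ} (h : kp ∈ S) :
    ∃ kq ∈ S, kq.2 = poleOrder S kq.1 := by
  obtain ⟨kq, hkq, hmax⟩ := Finset.exists_mem_eq_sup (S.filter fun kq => kq.1 = kp.1)
    ⟨kp, Finset.mem_filter.2 ⟨h, rfl⟩⟩ Prod.snd
  obtain ⟨hkqS, hk⟩ := Finset.mem_filter.1 hkq
  exact ⟨kq, hkqS, by rw [poleOrder, hk, hmax]⟩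

variable (A : ι → F[X]) (ρ : ι → F) (c₀ : F)

section

variable (S : Finset (ι × ℕ)) (c : ι × ℕ → F)

def poleSum (z : F) : F :=
  c₀ + ∑ kp ∈ S, c kp * ((A kp.1).eval z / (z - ρ kp.1)) ^ kp.2

def clearedNumerator : F[X] :=
  Polynomial.C c₀ * ∏ k ∈ S.image Prod.fst, (X - Polynomial.C (ρ k)) ^ poleOrder S k +
    ∑ kp ∈ S, Polynomial.C (c kp) * A kp.1 ^ kp.2 *
      (X - Polynomial.C (ρ kp.1)) ^ (poleOrder S kp.1 - kp.2) *
      ∏ k ∈ (S.image Prod.fst).erase kp.1, (X - Polynomial.C (ρ k)) ^ poleOrder S k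

lemma eval_clearedNumerator {z : F} (hz : ∀ kp ∈ S, z ≠ ρ kp.1) :
    (clearedNumerator A ρ c₀ S c).eval z =
      poleSum A ρ c₀ S c z * ∏ k ∈ S.image Prod.fst, (z - ρ k) ^ poleOrder S k := by
  simp only [clearedNumerator, poleSum, eval_add, eval_mul, eval_pow, eval_sub, eval_C, eval_X,
    eval_prod, eval_finsetSum, add_mul, Finset.sum_mul]
  congr 1
  refine Finset.sum_congr rfl fun kp hkp => ?_
  rw [← Finset.mul_prod_erase _ _ (Finset.mem_image_of_mem Prod.fst hkp), ← mul_assoc,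
    mul_assoc (c kp) ((_ / _) ^ _),
    div_pow_mul_pow_of_le (sub_ne_zero.2 (hz kp hkp)) (le_poleOrder hkp)]
  ring

lemma eval_clearedNumerator_pole (hS : ∀ kp ∈ S, 1 ≤ kp.2) {kq : ι × ℕ}
    (hkq : kq ∈ S) (hmax : kq.2 = poleOrder S kq.1) :
    (clearedNumerator A ρ c₀ S c).eval (ρ kq.1) = c kq * (A kq.1).eval (ρ kq.1) ^ kq.2 *
      ∏ k ∈ (S.image Prod.fst).erase kq.1, (ρ kq.1 - ρ k) ^ poleOrder S k := by
  have hq : kq.1 ∈ S.image Prod.fst := Finset.mem_image_of_mem Prod.fst hkq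
  have hm : poleOrder S kq.1 ≠ 0 := by have := hS kq hkq; omega
  have hvanish : ∀ e ≠ 0, (ρ kq.1 - ρ kq.1) ^ e = 0 := fun e he => by rw [sub_self, zero_pow he]
  have hprod : ∀ s, kq.1 ∈ s → ∏ k ∈ s, (ρ kq.1 - ρ k) ^ poleOrder S k = 0 :=
    fun s hs => Finset.prod_eq_zero hs (hvanish _ hm)
  simp only [clearedNumerator, eval_add, eval_mul, eval_pow, eval_sub, eval_C, eval_X, eval_prod,
    eval_finsetSum, hprod _ hq, mul_zero, zero_add]
  rw [Finset.sum_eq_single_of_mem kq hkq, ← hmax, Nat.sub_self, pow_zero, mul_one]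
  intro kp hkp hne
  by_cases hk : kp.1 = kq.1
  · have hlt : kp.2 < poleOrder S kp.1 :=
      (le_poleOrder hkp).lt_of_ne fun h => hne (Prod.ext hk (by rw [h, hk, hmax]))
    rw [hk] at hlt ⊢
    rw [hvanish _ (by omega), mul_zero, zero_mul]
  · rw [hprod _ (Finset.mem_erase.2 ⟨Ne.symm hk, hq⟩), mul_zero]

end

theorem eq_zero_of_infinite_setOf_poleSum_eq_zero (hρ : Injective ρ)
    (hA : ∀ k, (A k).eval (ρ k) ≠ 0) (c : ι × ℕ →₀ F) (hc : ∀ kp ∈ c.support, 1 ≤ kp.2)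
    (hZ : {z | (∀ kp ∈ c.support, z ≠ ρ kp.1) ∧ poleSum A ρ c₀ c.support c z = 0}.Infinite) :
    c₀ = 0 ∧ c = 0 := by
  have hQ : clearedNumerator A ρ c₀ c.support c = 0 :=
    eq_zero_of_infinite_isRoot _ <| hZ.mono fun z hz => by
      simp [IsRoot, eval_clearedNumerator _ _ _ _ _ hz.1, hz.2]
  have hc_zero : c = 0 := by
    by_contra hne
    obtain ⟨kp, hkp⟩ := Finsupp.support_nonempty_iff.2 hne
    obtain ⟨kq, hkq, hmax⟩ := exists_mem_snd_eq_poleOrder hkp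
    have hpole := eval_clearedNumerator_pole A ρ c₀ _ c hc hkq hmax
    rw [hQ, eval_zero, eq_comm] at hpole
    have hE : ∏ k ∈ (c.support.image Prod.fst).erase kq.1,
        (ρ kq.1 - ρ k) ^ poleOrder c.support k ≠ 0 :=
      Finset.prod_ne_zero_iff.2 fun k hk => pow_ne_zero _ <| sub_ne_zero.2 <|
        hρ.ne (Finset.ne_of_mem_erase hk).symm
    exact Finsupp.mem_support_iff.1 hkq <| by simpa [hA, hE] using hpole
  obtain ⟨z, -, hz⟩ := hZ.nonempty
  refine ⟨?_, hc_zero⟩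
  simpa [poleSum, hc_zero] using hz

end PoleSum

lemma RatFunc.X_zpow_injective {K : Type*} [Field K] :
    Injective fun m : ℤ => (RatFunc.X : RatFunc K) ^ m := by
  classical
  intro m n h
  simpa using congrArg (RatFunc.inftyValuation K) h

section QuantumRatio

variable {K : Type*} [Field K] (x : K)

def quantumRatioNum (k : ℤ) : K[X] := Polynomial.C x⁻¹ * X - Polynomial.C (x ^ (-(2 * k + 3)))

def quantumRatioPole (k : ℤ) : K := x ^ (-(2 * k + 4))

variable {x}

lemma quantumRatio_eq (hx : x ≠ 0) (n k : ℤ) :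
    (x ^ (n + k + 1) - x ^ (-(n + k + 1))) / (x ^ (n + k + 2) - x ^ (-(n + k + 2))) =
      (quantumRatioNum x k).eval (x ^ (2 * n)) / (x ^ (2 * n) - quantumRatioPole x k) := by
  have hnum : x ^ (n + k + 1) - x ^ (-(n + k + 1)) =
      x ^ (k + 2 - n) * (x⁻¹ * x ^ (2 * n) - x ^ (-(2 * k + 3))) := by
    rw [mul_sub, ← mul_assoc, ← zpow_neg_one, ← zpow_add₀ hx, ← zpow_add₀ hx, ← zpow_add₀ hx]
    ring_nf
  have hden : x ^ (n + k + 2) - x ^ (-(n + k + 2)) =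
      x ^ (k + 2 - n) * (x ^ (2 * n) - x ^ (-(2 * k + 4))) := by
    rw [mul_sub, ← zpow_add₀ hx, ← zpow_add₀ hx]
    ring_nf
  rw [hnum, hden, mul_div_mul_left _ _ (zpow_ne_zero _ hx), quantumRatioNum, quantumRatioPole, eval_sub, eval_mul, eval_C, eval_C, eval_X]

lemma quantumRatioPole_injective (hinj : Injective fun m : ℤ => x ^ m) :
    Injective (quantumRatioPole x) :=
  hinj.comp fun k l hkl => by omega

lemma eval_quantumRatioNum_quantumRatioPole_ne_zero (hx : x ≠ 0)
    (hinj : Injective fun m : ℤ => x ^ m) (k : ℤ) :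
    (quantumRatioNum x k).eval (quantumRatioPole x k) ≠ 0 := by
  rw [quantumRatioNum, quantumRatioPole, eval_sub, eval_mul, eval_C, eval_C, eval_X,
    ← zpow_neg_one, ← zpow_add₀ hx]
  exact sub_ne_zero.2 (hinj.ne (by omega))

end QuantumRatio

lemma laurentToRatFunc_T (m : ℤ) : laurentToRatFunc (T m) = RatFunc.X ^ m := by
  rw [laurentToRatFunc, T, AddMonoidAlgebra.lift_single]
  simp

lemma laurentToRatFunc_toLaurent (f : ℂ[X]) :
    laurentToRatFunc f.toLaurent = algebraMap ℂ[X] (RatFunc ℂ) f := by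
  have hcomp : laurentToRatFunc.comp Polynomial.toLaurentAlg =
      IsScalarTower.toAlgHom ℂ ℂ[X] (RatFunc ℂ) :=
    Polynomial.algHom_ext <| by simp [laurentToRatFunc_T, RatFunc.algebraMap_X]
  exact AlgHom.congr_fun hcomp f

lemma laurentToRatFunc_injective : Injective laurentToRatFunc := by
  refine (injective_iff_map_eq_zero _).2 fun f hf => ?_
  obtain ⟨n, f', hf'⟩ := f.exists_T_pow
  have hf'0 : f' = 0 := by
    apply RatFunc.algebraMap_injective ℂ
    rw [← laurentToRatFunc_toLaurent, hf', map_mul, hf, zero_mul, map_zero]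
  rw [hf'0, map_zero, eq_comm] at hf'
  exact (isUnit_T _).mul_left_eq_zero.1 hf'

/-- Linear independence step of Proposition 6.8: if a finitely supported
`ℂ[q,q⁻¹]`-linear combination `a₀ + ∑_{k,p} a_{k,p} ([n+k+1]/[n+k+2])^p` (with
`a_{k,p} = 0` unless `k ≥ r` and `p ≥ 1`) vanishes in `ℂ(X)` for all `n ≥ -(r+1)`,
then all the coefficients vanish. -/
theorem box_powers_linearIndependent (r : ℤ)
    (a₀ : LaurentPolynomial ℂ) (a : ℤ × ℕ →₀ LaurentPolynomial ℂ)
    (ha : ∀ k : ℤ, ∀ p : ℕ, a (k, p) ≠ 0 → r ≤ k ∧ 1 ≤ p)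
    (h : ∀ n : ℤ, -(r + 1) ≤ n →
      laurentToRatFunc a₀ +
        ∑ kp ∈ a.support, laurentToRatFunc (a kp) *
          (((RatFunc.X : RatFunc ℂ) ^ (n + kp.1 + 1) - RatFunc.X ^ (-(n + kp.1 + 1))) /
            ((RatFunc.X : RatFunc ℂ) ^ (n + kp.1 + 2) - RatFunc.X ^ (-(n + kp.1 + 2)))) ^ kp.2
        = 0) :
    a₀ = 0 ∧ a = 0 := by
  have hx : (RatFunc.X : RatFunc ℂ) ≠ 0 := RatFunc.X_ne_zero
  have hinj : Injective fun m : ℤ => (RatFunc.X : RatFunc ℂ) ^ m := RatFunc.X_zpow_injective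
  set c := a.mapRange laurentToRatFunc (map_zero _)
  have hsupp : c.support = a.support :=
    Finsupp.support_mapRange_of_injective _ a laurentToRatFunc_injective
  have hka : ∀ kp ∈ a.support, r ≤ kp.1 ∧ 1 ≤ kp.2 :=
    fun kp hkp => ha kp.1 kp.2 (Finsupp.mem_support_iff.1 hkp)
  have hroots : (fun n : ℤ => (RatFunc.X : RatFunc ℂ) ^ (2 * n)) '' Set.Ici (-(r + 1)) ⊆
      {z | (∀ kp ∈ c.support, z ≠ quantumRatioPole RatFunc.X kp.1) ∧
        poleSum (quantumRatioNum RatFunc.X) (quantumRatioPole RatFunc.X) (laurentToRatFunc a₀)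
          c.support c z = 0} := by
    rintro _ ⟨n, hn, rfl⟩
    rw [hsupp]
    refine ⟨fun kp hkp => hinj.ne ?_, ?_⟩
    · have := (hka kp hkp).1
      rw [Set.mem_Ici] at hn
      omega
    · rw [← h n hn]
      simp only [poleSum, c, Finsupp.mapRange_apply, quantumRatio_eq hx]
  obtain ⟨ha₀, hc⟩ := eq_zero_of_infinite_setOf_poleSum_eq_zero _ _ _
    (quantumRatioPole_injective hinj) (eval_quantumRatioNum_quantumRatioPole_ne_zero hx hinj) c
    (hsupp ▸ fun kp hkp => (hka kp hkp).2)
    (((Set.Ici_infinite _).image (hinj.comp (mul_right_injective₀ two_ne_zero)).injOn).mono hroots)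
  exact ⟨laurentToRatFunc_injective (ha₀.trans (map_zero _).symm),
    Finsupp.mapRange_injective _ (map_zero _) laurentToRatFunc_injective hc⟩

end
end
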